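/- arXiv:1405.5762 — 7 statements merged into one kernel-verified Lean document; each statement's English description precedes it below -/
import Mathlib

section
/- Let {B(x_i, r_i)}_{i=1}^∞ be a countable collection of closed Euclidean balls in ℝ^d (with centres x_i ∈ ℝ^d and radii r_i > 0). Assume (1) the collection is shrinking locally, and (2) Lebesgue-almost every point of ℝ^d belongs to limsup B(x_i, r_i), i.e. almost every α ∈ ℝ^d lies in infinitely many of the balls B(x_i, r_i). Then the set Bad({B(x_i, r_i)}) of badly approximable points with respect to {B(x_i, r_i)} has d-dimensional Lebesgue measure zero. -/
/-!
A point of `A κ N = {α | ∀ i ≥ N, α ∉ B(xᵢ, κ rᵢ)}` that lies in infinitely many balls `B(xᵢ, rᵢ)`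
lies in such balls of arbitrarily small radius (the collection shrinks locally), and the concentric
balls `B(xᵢ, κ rᵢ) ⊆ B(α, 2rᵢ)` miss `A κ N` while filling a fixed proportion `(κ/2)^d` of
`B(α, 2rᵢ)`. So `A κ N` is porous at almost every one of its points, hence has no Lebesgue density
points and is null. The badly approximable points form the countable union of the sets
`A (1/(m+1)) N`.
-/

open MeasureTheory Metric Set Filter Topology Module

def UpperPorousAt {X : Type*} [PseudoMetricSpace X] (s : Set X) (α : X) : Prop :=
  ∃ κ > (0 : ℝ), ∃ᶠ ρ in 𝓝[>] 0, ∃ y, closedBall y (κ * ρ) ⊆ closedBall α ρ ∧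
    Disjoint s (closedBall y (κ * ρ))

section Density

variable {E : Type*} [NormedAddCommGroup E] [NormedSpace ℝ E] [FiniteDimensional ℝ E]
  [MeasurableSpace E] [BorelSpace E] (μ : Measure E) [μ.IsAddHaarMeasure]

theorem addHaar_closedBall_mul_eq_ofReal_pow_mul {y α : E} {κ ρ : ℝ} (hκ : 0 ≤ κ) (hρ : 0 ≤ ρ) :
    μ (closedBall y (κ * ρ)) = ENNReal.ofReal (κ ^ finrank ℝ E) * μ (closedBall α ρ) := by
  rw [Measure.addHaar_closedBall_mul μ y hκ hρ, Measure.addHaar_closedBall_center μ α]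

theorem addHaar_inter_closedBall_div_le_of_disjoint {s : Set E} {α y : E} {κ ρ : ℝ}
    (hκ : 0 ≤ κ) (hρ : 0 < ρ) (hsub : closedBall y (κ * ρ) ⊆ closedBall α ρ)
    (hdisj : Disjoint s (closedBall y (κ * ρ))) :
    μ (s ∩ closedBall α ρ) / μ (closedBall α ρ) ≤ 1 - ENNReal.ofReal (κ ^ finrank ℝ E) := by
  have hB0 : μ (closedBall α ρ) ≠ 0 := (measure_closedBall_pos μ α hρ).ne'
  have hBtop : μ (closedBall α ρ) ≠ ⊤ := measure_closedBall_lt_top.ne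
  rw [ENNReal.div_le_iff hB0 hBtop, ENNReal.sub_mul (fun _ _ => hBtop), one_mul,
    ← addHaar_closedBall_mul_eq_ofReal_pow_mul μ hκ hρ.le]
  calc μ (s ∩ closedBall α ρ)
      ≤ μ (closedBall α ρ \ closedBall y (κ * ρ)) :=
        measure_mono fun z hz => ⟨hz.2, hdisj.notMem_of_mem_left hz.1⟩
    _ = μ (closedBall α ρ) - μ (closedBall y (κ * ρ)) :=
        measure_sdiff hsub measurableSet_closedBall.nullMeasurableSet
          (measure_closedBall_lt_top (x := y)).ne

variable {μ}

theorem UpperPorousAt.not_tendsto_density_one {s : Set E} {α : E} (h : UpperPorousAt s α) :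
    ¬Tendsto (fun ρ => μ (s ∩ closedBall α ρ) / μ (closedBall α ρ)) (𝓝[>] 0) (𝓝 1) := by
  obtain ⟨κ, hκ, hfreq⟩ := h
  intro hdens
  have hgap : 1 - ENNReal.ofReal (κ ^ finrank ℝ E) < 1 :=
    ENNReal.sub_lt_self ENNReal.one_ne_top one_ne_zero (ENNReal.ofReal_pos.2 (by positivity)).ne'
  obtain ⟨ρ, ⟨y, hsub, hdisj⟩, hlt, hρ⟩ :=
    (hfreq.and_eventually ((hdens.eventually (lt_mem_nhds hgap)).and self_mem_nhdsWithin)).exists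
  exact (addHaar_inter_closedBall_div_le_of_disjoint μ hκ.le hρ hsub hdisj).not_gt hlt

theorem addHaar_eq_zero_of_ae_upperPorousAt {s : Set E} (hs : MeasurableSet s)
    (h : ∀ᵐ α ∂μ, α ∈ s → UpperPorousAt s α) : μ s = 0 := by
  rw [measure_eq_zero_iff_ae_notMem]
  filter_upwards [h, Besicovitch.ae_tendsto_measure_inter_div_of_measurableSet μ hs]
    with α hporous hdens hα
  exact (hporous hα).not_tendsto_density_one (by simpa [hα] using hdens)

end Density

section Balls

variable {X : Type*} [PseudoMetricSpace X] {x : ℕ → X} {r : ℕ → ℝ}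

theorem frequently_mem_closedBall_and_radius_le {α : X} {ρ ε : ℝ} (hρ : 0 ≤ ρ)
    (hfin : {i | (closedBall (x i) (r i) ∩ closedBall α ρ).Nonempty ∧ ε < r i}.Finite)
    (hα : ∃ᶠ i in atTop, α ∈ closedBall (x i) (r i)) :
    ∃ᶠ i in atTop, α ∈ closedBall (x i) (r i) ∧ r i ≤ ε := by
  have hfar : ∀ᶠ i in atTop, i ∉ {i | (closedBall (x i) (r i) ∩ closedBall α ρ).Nonempty ∧
      ε < r i} := Nat.cofinite_eq_atTop ▸ hfin.eventually_cofinite_notMem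
  exact (hα.and_eventually hfar).mono fun i ⟨hi, hnot⟩ =>
    ⟨hi, not_lt.1 fun hlt => hnot ⟨⟨α, hi, mem_closedBall_self hρ⟩, hlt⟩⟩

theorem upperPorousAt_setOf_notMem_closedBall_mul {α : X} {κ : ℝ} {N : ℕ}
    (hκ0 : 0 < κ) (hκ1 : κ ≤ 1)
    (hshrink : ∀ ε > (0 : ℝ),
      {i | (closedBall (x i) (r i) ∩ closedBall α 1).Nonempty ∧ ε < r i}.Finite)
    (hα : ∃ᶠ i in atTop, α ∈ closedBall (x i) (r i))
    (hαA : ∀ i ≥ N, α ∉ closedBall (x i) (κ * r i)) :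
    UpperPorousAt {β | ∀ i ≥ N, β ∉ closedBall (x i) (κ * r i)} α := by
  refine ⟨κ / 2, half_pos hκ0, (nhdsGT_basis 0).frequently_iff.2 fun ε hε => ?_⟩
  obtain ⟨i, hiN, hi, hiε⟩ := frequently_atTop.1
    (frequently_mem_closedBall_and_radius_le zero_le_one (hshrink (ε / 4) (by positivity)) hα) N
  have hdist : dist α (x i) ≤ r i := hi
  -- `α` is in the ball but not in the shrunk one, which forces `r i > 0`
  have hri : 0 < r i := by
    have : κ * r i < dist α (x i) := not_le.1 (hαA i hiN)
    nlinarith [dist_nonneg (x := α) (y := x i)]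
  have hκρ : κ / 2 * (2 * r i) = κ * r i := by ring
  refine ⟨2 * r i, ⟨by positivity, by linarith⟩, x i, ?_, ?_⟩ <;> rw [hκρ]
  · refine closedBall_subset_closedBall' ?_
    rw [dist_comm]
    nlinarith
  · exact disjoint_left.2 fun β hβ => hβ i hiN

theorem measurableSet_setOf_notMem_closedBall_mul [MeasurableSpace X] [OpensMeasurableSpace X]
    (κ : ℝ) (N : ℕ) : MeasurableSet {α | ∀ i ≥ N, α ∉ closedBall (x i) (κ * r i)} := by
  simp only [ofPred_forall]
  exact .iInter fun i => .iInter fun _ => measurableSet_closedBall.compl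

theorem setOf_exists_notMem_closedBall_mul_subset_iUnion :
    {α | ∃ κ > (0 : ℝ), ∃ N : ℕ, ∀ i ≥ N, α ∉ closedBall (x i) (κ * r i)} ⊆
      ⋃ (m : ℕ) (N : ℕ), {α | ∀ i ≥ N, α ∉ closedBall (x i) (1 / (m + 1) * r i)} := by
  rintro α ⟨κ, hκ, N, hN⟩
  obtain ⟨m, hm⟩ := exists_nat_one_div_lt hκ
  refine mem_iUnion₂.2 ⟨m, N, fun i hi hmem => hN i hi (closedBall_subset_closedBall ?_ hmem)⟩
  have hri : 0 ≤ r i :=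
    nonneg_of_mul_nonneg_right (nonneg_of_mem_closedBall hmem) (by positivity)
  exact mul_le_mul_of_nonneg_right hm.le hri

end Balls

theorem badly_approximable_measure_zero_general (d : ℕ)
    (x : ℕ → EuclideanSpace ℝ (Fin d)) (r : ℕ → ℝ)
    (hshrink : ∀ (y : EuclideanSpace ℝ (Fin d)) (ρ : ℝ), 0 < ρ → ∀ ε > (0 : ℝ),
      {i : ℕ | (closedBall (x i) (r i) ∩ closedBall y ρ).Nonempty ∧ ε < r i}.Finite)
    (hae : ∀ᵐ α : EuclideanSpace ℝ (Fin d), ∀ n : ℕ, ∃ i ≥ n, α ∈ closedBall (x i) (r i)) :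
    volume {α : EuclideanSpace ℝ (Fin d) |
      ∃ κ > (0 : ℝ), ∃ N : ℕ, ∀ i ≥ N, α ∉ closedBall (x i) (κ * r i)} = 0 := by
  refine measure_mono_null setOf_exists_notMem_closedBall_mul_subset_iUnion
    (measure_iUnion_null fun m => measure_iUnion_null fun N => ?_)
  have hm : (0 : ℝ) < 1 / (m + 1) := by positivity
  have hm1 : (1 : ℝ) / (m + 1) ≤ 1 :=
    div_le_one_of_le₀ (le_add_of_nonneg_left m.cast_nonneg) (by positivity)
  refine addHaar_eq_zero_of_ae_upperPorousAt (measurableSet_setOf_notMem_closedBall_mul _ N) ?_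
  filter_upwards [hae] with α hα hαA
  exact upperPorousAt_setOf_notMem_closedBall_mul hm hm1 (hshrink α 1 one_pos)
    (frequently_atTop.2 hα) hαA

/-- **Theorem (main).** If the countable collection of closed Euclidean balls
`{B(x i, r i)}` in `ℝ^d` is shrinking locally and Lebesgue-almost every point lies in
`limsup B(x i, r i)` (i.e. in infinitely many of the balls), then the set of badly
approximable points with respect to the collection has Lebesgue measure zero. -/
theorem badly_approximable_measure_zero (d : ℕ)
    (x : ℕ → EuclideanSpace ℝ (Fin d)) (r : ℕ → ℝ) (hr : ∀ i, 0 < r i)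
    (hshrink : ∀ (y : EuclideanSpace ℝ (Fin d)) (ρ : ℝ), 0 < ρ → ∀ ε > (0 : ℝ),
      {i : ℕ | (closedBall (x i) (r i) ∩ closedBall y ρ).Nonempty ∧ ε < r i}.Finite)
    (hae : ∀ᵐ α : EuclideanSpace ℝ (Fin d), ∀ n : ℕ, ∃ i ≥ n, α ∈ closedBall (x i) (r i)) :
    volume {α : EuclideanSpace ℝ (Fin d) |
      ∃ κ > (0 : ℝ), ∃ N : ℕ, ∀ i ≥ N, α ∉ closedBall (x i) (κ * r i)} = 0 :=
  badly_approximable_measure_zero_general d x r hshrink hae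
end

section
/- Let {B(x_i, r_i)}_{i=1}^∞ be a countable collection of closed Euclidean balls in ℝ^d that is shrinking locally. Then Lebesgue-almost every α ∈ ℝ^d belongs to limsup B(x_i, r_i) if and only if for every κ > 0, Lebesgue-almost every α ∈ ℝ^d belongs to limsup B(x_i, κ r_i). -/
open MeasureTheory Metric Set Filter
open scoped Topology

lemma mem_blimsup_atTop_iff_aux {α : Type*} (u : ℕ → Set α) (p : ℕ → Prop) (x : α) :
    x ∈ blimsup u atTop p ↔ ∀ n : ℕ, ∃ i ≥ n, p i ∧ x ∈ u i := by
  rw [blimsup_eq_iInf_biSup_of_nat]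
  simp only [iInf_eq_iInter, iSup_eq_iUnion, mem_iInter, mem_iUnion]
  constructor
  · rintro h n; obtain ⟨i, ⟨hp, hi⟩, hx⟩ := h n; exact ⟨i, hi, hp, hx⟩
  · rintro h n; obtain ⟨i, hi, hp, hx⟩ := h n; exact ⟨i, ⟨hp, hi⟩, hx⟩

/-- **Corollary.** For a shrinking-locally countable collection of closed Euclidean balls
in `ℝ^d`, almost every point lies in `limsup B(x i, r i)` if and only if for every `κ > 0`
almost every point lies in `limsup B(x i, κ * r i)`. -/
theorem ae_limsup_iff_ae_limsup_scaled (d : ℕ)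
    (x : ℕ → EuclideanSpace ℝ (Fin d)) (r : ℕ → ℝ) (hr : ∀ i, 0 < r i)
    (hshrink : ∀ (y : EuclideanSpace ℝ (Fin d)) (ρ : ℝ), 0 < ρ → ∀ ε > (0 : ℝ),
      {i : ℕ | (closedBall (x i) (r i) ∩ closedBall y ρ).Nonempty ∧ ε < r i}.Finite) :
    (∀ᵐ α : EuclideanSpace ℝ (Fin d), ∀ n : ℕ, ∃ i ≥ n, α ∈ closedBall (x i) (r i)) ↔
      (∀ κ > (0 : ℝ), ∀ᵐ α : EuclideanSpace ℝ (Fin d),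
        ∀ n : ℕ, ∃ i ≥ n, α ∈ closedBall (x i) (κ * r i)) := by
  classical
  constructor
  · intro h κ hκ
    -- localize: it suffices to prove the statement on each ball of radius N
    have key : ∀ N : ℕ, ∀ᵐ α : EuclideanSpace ℝ (Fin d), α ∈ closedBall (0 : EuclideanSpace ℝ (Fin d)) N →
        ∀ n : ℕ, ∃ i ≥ n, α ∈ closedBall (x i) (κ * r i) := by
      intro N
      set p : ℕ → Prop := fun i =>
        (closedBall (x i) (r i) ∩ closedBall (0 : EuclideanSpace ℝ (Fin d)) (N + 1)).Nonempty with hp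
      set r' : ℕ → ℝ := fun i => if p i then r i else 0 with hr'
      have hr'0 : ∀ i, 0 ≤ r' i := by
        intro i; by_cases h : p i <;> simp [hr', h, (hr i).le]
      have htend : Tendsto r' atTop (𝓝 0) := by
        rw [NormedAddCommGroup.tendsto_nhds_zero]
        intro ε hε
        rw [← Nat.cofinite_eq_atTop, eventually_cofinite]
        refine ((hshrink 0 (N + 1) (by positivity) (ε / 2) (half_pos hε)).subset ?_)
        intro i hi
        simp only [mem_setOf_eq, not_lt] at hi ⊢
        have h1 : ε ≤ r' i := by
          rwa [Real.norm_eq_abs, abs_of_nonneg (hr'0 i)] at hi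
        have hpi : p i := by
          by_contra hc
          simp [hr', hc] at h1
          exact absurd h1 (not_le.mpr hε)
        refine ⟨hpi, ?_⟩
        have : r' i = r i := by simp [hr', hpi]
        linarith [h1, this]
      have hkey := blimsup_cthickening_mul_ae_eq (volume : Measure (EuclideanSpace ℝ (Fin d))) p
        (fun i => ({x i} : Set (EuclideanSpace ℝ (Fin d)))) hκ r' htend
      have e1 : (fun i => cthickening (κ * r' i) ({x i} : Set (EuclideanSpace ℝ (Fin d))))
          = fun i => closedBall (x i) (κ * r' i) :=
        funext fun i => cthickening_singleton _ (mul_nonneg hκ.le (hr'0 i))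
      have e2 : (fun i => cthickening (r' i) ({x i} : Set (EuclideanSpace ℝ (Fin d))))
          = fun i => closedBall (x i) (r' i) :=
        funext fun i => cthickening_singleton _ (hr'0 i)
      rw [e1, e2] at hkey
      rw [Filter.eventuallyEq_set] at hkey
      filter_upwards [h, hkey] with α hα1 hα2 hαN n
      -- α lies in the unscaled blimsup restricted to p
      have hmem : α ∈ blimsup (fun i => closedBall (x i) (r' i)) atTop p := by
        rw [mem_blimsup_atTop_iff_aux]
        intro m
        obtain ⟨i, hi, hxi⟩ := hα1 m
        have hαN1 : α ∈ closedBall (0 : EuclideanSpace ℝ (Fin d)) (N + 1) := by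
          rw [mem_closedBall] at hαN ⊢
          linarith
        have hpi : p i := ⟨α, hxi, hαN1⟩
        exact ⟨i, hi, hpi, by simpa [hr', hpi] using hxi⟩
      have hmem2 : α ∈ blimsup (fun i => closedBall (x i) (κ * r' i)) atTop p :=
        hα2.mpr hmem
      rw [mem_blimsup_atTop_iff_aux] at hmem2
      obtain ⟨i, hi, hpi, hxi⟩ := hmem2 n
      exact ⟨i, hi, by simpa [hr', hpi] using hxi⟩
    rw [← ae_all_iff] at key
    filter_upwards [key] with α hα
    exact hα ⌈‖α‖⌉₊ (by simpa [mem_closedBall] using Nat.le_ceil ‖α‖)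
  · intro h
    have := h 1 one_pos
    simpa using this
end

section
/- Let {B(x_i, r_i)}_{i=1}^∞ be a finite or countably infinite collection of closed intervals in ℝ (one-dimensional Euclidean balls, B(x,r) = [x−r, x+r]) and let 0 < δ ≤ 1. Then the Lebesgue measure of ∪_{i} B(x_i, δ r_i) is at least δ times the Lebesgue measure of ∪_{i} B(x_i, r_i). -/
open MeasureTheory Metric Set

private lemma shrink_aux (δ : ℝ) (hδ0 : 0 < δ) (hδ1 : δ ≤ 1) :
    ∀ (n : ℕ) (x r : ℕ → ℝ),
      (∀ i j, i ≤ j → j < n → x i - r i ≤ x j - r j) →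
      (∀ i j, i ≤ j → j < n → x i + r i ≤ x j + r j) →
      ENNReal.ofReal δ * volume (⋃ i ∈ Finset.range n, Icc (x i - r i) (x i + r i)) ≤
        volume (⋃ i ∈ Finset.range n, Icc (x i - δ * r i) (x i + δ * r i)) := by
  intro n
  induction n with
  | zero => intro x r _ _; simp
  | succ n ih =>
    intro x r ha hb
    rcases Nat.eq_zero_or_pos n with hn | hn
    · subst hn
      simp only [zero_add, Finset.range_one, Finset.set_biUnion_singleton, Real.volume_Icc]
      rw [← ENNReal.ofReal_mul hδ0.le]
      apply le_of_eq
      congr 1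
      ring
    · obtain ⟨m, rfl⟩ : ∃ m, n = m + 1 := ⟨n - 1, (Nat.succ_pred_eq_of_pos hn).symm⟩
      set A : Set ℝ := ⋃ i ∈ Finset.range (m + 1), Icc (x i - r i) (x i + r i) with hA
      set A' : Set ℝ := ⋃ i ∈ Finset.range (m + 1), Icc (x i - δ * r i) (x i + δ * r i) with hA'
      set p : ℝ := max (x (m + 1) - r (m + 1)) (x m + r m) with hp
      set q : ℝ := max (x (m + 1) - δ * r (m + 1)) (x m + δ * r m) with hq
      have hsplit : (⋃ i ∈ Finset.range (m + 2), Icc (x i - r i) (x i + r i)) =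
          Icc (x (m + 1) - r (m + 1)) (x (m + 1) + r (m + 1)) ∪ A := by
        rw [Finset.range_add_one, Finset.set_biUnion_insert]
      have hsplit' : (⋃ i ∈ Finset.range (m + 2), Icc (x i - δ * r i) (x i + δ * r i)) =
          Icc (x (m + 1) - δ * r (m + 1)) (x (m + 1) + δ * r (m + 1)) ∪ A' := by
        rw [Finset.range_add_one, Finset.set_biUnion_insert]
      -- LHS estimate
      have hsub : Icc (x (m + 1) - r (m + 1)) (x (m + 1) + r (m + 1)) ∪ A ⊆
          Icc p (x (m + 1) + r (m + 1)) ∪ A := by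
        intro t ht
        rcases ht with ht | ht
        · by_cases hpt : p ≤ t
          · exact Or.inl ⟨hpt, ht.2⟩
          · push_neg at hpt
            right
            have htm : t < x m + r m := by
              rcases lt_max_iff.mp hpt with h | h
              · exact absurd ht.1 (not_le.mpr h)
              · exact h
            have ham : x m - r m ≤ t :=
              le_trans (ha m (m + 1) (by omega) (by omega)) ht.1
            exact Set.mem_biUnion (Finset.mem_range.mpr (by omega)) ⟨ham, htm.le⟩
        · exact Or.inr ht
      have hL : volume (⋃ i ∈ Finset.range (m + 2), Icc (x i - r i) (x i + r i)) ≤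
          volume A + ENNReal.ofReal (x (m + 1) + r (m + 1) - p) := by
        rw [hsplit]
        refine le_trans (measure_mono hsub) ?_
        refine le_trans (measure_union_le _ _) ?_
        rw [Real.volume_Icc, add_comm]
      -- RHS estimate
      have humono : ∀ i, i < m + 1 → x i + δ * r i ≤ x m + δ * r m := by
        intro i hi
        have h1 := ha i m (by omega) (by omega)
        have h2 := hb i m (by omega) (by omega)
        nlinarith [mul_nonneg (sub_nonneg.2 hδ1) (sub_nonneg.2 (show x i ≤ x m by linarith))]
      have hA'sub : A' ⊆ Iic (x m + δ * r m) := by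
        intro t ht
        rw [hA', Set.mem_iUnion₂] at ht
        obtain ⟨i, hi, hti⟩ := ht
        exact le_trans hti.2 (humono i (Finset.mem_range.mp hi))
      have hdisj : Disjoint A' (Ioc q (x (m + 1) + δ * r (m + 1))) := by
        refine Set.disjoint_left.mpr fun t htA ht => ?_
        have h1 : t ≤ x m + δ * r m := hA'sub htA
        have h2 : x m + δ * r m < t := lt_of_le_of_lt (le_max_right _ _) ht.1
        exact absurd h1 (not_le.mpr h2)
      have hIocsub : Ioc q (x (m + 1) + δ * r (m + 1)) ⊆
          Icc (x (m + 1) - δ * r (m + 1)) (x (m + 1) + δ * r (m + 1)) := fun t ht =>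
        ⟨le_trans (le_max_left _ _) ht.1.le, ht.2⟩
      have hR : volume A' + ENNReal.ofReal (x (m + 1) + δ * r (m + 1) - q) ≤
          volume (⋃ i ∈ Finset.range (m + 2), Icc (x i - δ * r i) (x i + δ * r i)) := by
        rw [hsplit']
        have : volume (A' ∪ Ioc q (x (m + 1) + δ * r (m + 1))) =
            volume A' + volume (Ioc q (x (m + 1) + δ * r (m + 1))) :=
          measure_union hdisj measurableSet_Ioc
        rw [Real.volume_Ioc] at this
        rw [← this]
        refine measure_mono (Set.union_subset ?_ ?_)
        · exact fun t ht => Or.inr ht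
        · exact fun t ht => Or.inl (hIocsub ht)
      -- termwise inequality
      have hterm : ENNReal.ofReal δ * ENNReal.ofReal (x (m + 1) + r (m + 1) - p) ≤
          ENNReal.ofReal (x (m + 1) + δ * r (m + 1) - q) := by
        rw [← ENNReal.ofReal_mul hδ0.le]
        apply ENNReal.ofReal_le_ofReal
        have hpa : x (m + 1) - r (m + 1) ≤ p := le_max_left _ _
        have hpb : x m + r m ≤ p := le_max_right _ _
        have hxm : x m ≤ x (m + 1) := by
          have h1 := ha m (m + 1) (by omega) (by omega)
          have h2 := hb m (m + 1) (by omega) (by omega)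
          linarith
        have key1 : δ * (x (m + 1) + r (m + 1) - p) ≤
            (x (m + 1) + δ * r (m + 1)) - (x (m + 1) - δ * r (m + 1)) := by
          nlinarith [mul_le_mul_of_nonneg_left
            (show x (m + 1) + r (m + 1) - p ≤ x (m + 1) + r (m + 1) - (x (m + 1) - r (m + 1))
              by linarith) hδ0.le]
        have key2 : δ * (x (m + 1) + r (m + 1) - p) ≤
            (x (m + 1) + δ * r (m + 1)) - (x m + δ * r m) := by
          nlinarith [mul_le_mul_of_nonneg_left
            (show x (m + 1) + r (m + 1) - p ≤ x (m + 1) + r (m + 1) - (x m + r m)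
              by linarith) hδ0.le,
            mul_nonneg (sub_nonneg.2 hδ1) (sub_nonneg.2 hxm)]
        rcases max_cases (x (m + 1) - δ * r (m + 1)) (x m + δ * r m) with ⟨hqe, _⟩ | ⟨hqe, _⟩ <;>
          rw [hq, hqe] <;> linarith
      -- combine
      have hih := ih x r (fun i j hij hj => ha i j hij (by omega))
        (fun i j hij hj => hb i j hij (by omega))
      calc ENNReal.ofReal δ * volume (⋃ i ∈ Finset.range (m + 2), Icc (x i - r i) (x i + r i))
          ≤ ENNReal.ofReal δ * (volume A + ENNReal.ofReal (x (m + 1) + r (m + 1) - p)) :=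
            mul_le_mul_right hL _
        _ = ENNReal.ofReal δ * volume A +
            ENNReal.ofReal δ * ENNReal.ofReal (x (m + 1) + r (m + 1) - p) := mul_add _ _ _
        _ ≤ volume A' + ENNReal.ofReal (x (m + 1) + δ * r (m + 1) - q) := add_le_add hih hterm
        _ ≤ _ := hR

private lemma shrink_finset {ι : Type*} (x r : ι → ℝ) (δ : ℝ) (hδ0 : 0 < δ) (hδ1 : δ ≤ 1) :
    ∀ (n : ℕ) (s : Finset ι), s.card ≤ n →
      ENNReal.ofReal δ * volume (⋃ i ∈ s, Icc (x i - r i) (x i + r i)) ≤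
        volume (⋃ i ∈ s, Icc (x i - δ * r i) (x i + δ * r i)) := by
  classical
  intro n
  induction n with
  | zero =>
    intro s hs
    rw [Finset.card_eq_zero.mp (Nat.le_zero.mp hs)]
    simp
  | succ n ih =>
    intro s hs
    by_cases hcon : ∃ j ∈ s, ∃ l ∈ s, j ≠ l ∧
        Icc (x j - r j) (x j + r j) ⊆ Icc (x l - r l) (x l + r l)
    · obtain ⟨j, hj, l, hl, hjl, hsubint⟩ := hcon
      have h1 : (⋃ i ∈ s, Icc (x i - r i) (x i + r i)) =
          ⋃ i ∈ s.erase j, Icc (x i - r i) (x i + r i) := by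
        apply subset_antisymm
        · refine Set.iUnion₂_subset fun i hi => ?_
          by_cases hij : i = j
          · subst hij
            intro t ht
            exact Set.mem_biUnion (Finset.mem_erase.mpr ⟨Ne.symm hjl, hl⟩) (hsubint ht)
          · intro t ht
            exact Set.mem_biUnion (Finset.mem_erase.mpr ⟨hij, hi⟩) ht
        · exact Set.biUnion_subset_biUnion_left (fun i hi => Finset.mem_of_mem_erase hi)
      have h2 : (⋃ i ∈ s.erase j, Icc (x i - δ * r i) (x i + δ * r i)) ⊆
          ⋃ i ∈ s, Icc (x i - δ * r i) (x i + δ * r i) :=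
        Set.biUnion_subset_biUnion_left (fun i hi => Finset.mem_of_mem_erase hi)
      have hcard : (s.erase j).card ≤ n := by
        have := Finset.card_erase_of_mem hj
        omega
      rw [h1]
      exact (ih _ hcard).trans (measure_mono h2)
    · push_neg at hcon
      rcases s.eq_empty_or_nonempty with rfl | ⟨i₀, hi₀⟩
      · simp
      set le : ι → ι → Bool := fun i j => decide (x i - r i ≤ x j - r j) with hle
      set L : List ι := s.toList.mergeSort le with hL
      have hperm : L.Perm s.toList := List.mergeSort_perm _ _
      have hsort : L.Pairwise (fun i j => le i j = true) :=
        List.pairwise_mergeSort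
          (fun a b c h1 h2 => by
            simp only [hle, decide_eq_true_eq] at *; linarith)
          (fun a b => by simp only [hle, Bool.or_eq_true, decide_eq_true_eq]; exact le_total _ _)
          s.toList
      set N : ℕ := L.length with hN
      set f : ℕ → ι := fun k => L.getD k i₀ with hf
      have hfget : ∀ k (hk : k < N), f k = L[k] := fun k hk => List.getD_eq_getElem L i₀ hk
      have hmem : ∀ k, f k ∈ s := by
        intro k
        by_cases hk : k < N
        · rw [hfget k hk]
          have : L[k] ∈ L := List.getElem_mem _
          rw [hperm.mem_iff, Finset.mem_toList] at this
          exact this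
        · rw [hf]
          simp only [List.getD_eq_getElem?_getD, List.getElem?_eq_none (by omega : L.length ≤ k)]
          exact hi₀
      have hkey : ∀ i j, i ≤ j → j < N → x (f i) - r (f i) ≤ x (f j) - r (f j) := by
        intro i j hij hj
        rcases eq_or_lt_of_le hij with rfl | hij
        · exact le_refl _
        · have := (List.pairwise_iff_getElem.mp hsort) i j (by omega) hj hij
          rw [hfget i (by omega), hfget j hj]
          simpa only [hle, decide_eq_true_eq] using this
      have hkeyb : ∀ i j, i ≤ j → j < N → x (f i) + r (f i) ≤ x (f j) + r (f j) := by
        intro i j hij hj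
        rcases eq_or_lt_of_le hij with rfl | hij
        · exact le_refl _
        · by_contra hcontra
          push_neg at hcontra
          have hne : f i ≠ f j := by
            intro h
            rw [h] at hcontra
            exact lt_irrefl _ hcontra
          have hsubint : Icc (x (f j) - r (f j)) (x (f j) + r (f j)) ⊆
              Icc (x (f i) - r (f i)) (x (f i) + r (f i)) :=
            Set.Icc_subset_Icc (hkey i j hij.le hj) hcontra.le
          exact hcon (f j) (hmem j) (f i) (hmem i) (Ne.symm hne) hsubint
      have hunion : ∀ (g : ι → Set ℝ), (⋃ i ∈ s, g i) = ⋃ k ∈ Finset.range N, g (f k) := by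
        intro g
        ext t
        simp only [Set.mem_iUnion, Finset.mem_range, exists_prop]
        constructor
        · rintro ⟨i, hi, ht⟩
          have : i ∈ L := by rw [hperm.mem_iff, Finset.mem_toList]; exact hi
          obtain ⟨k, hk, hki⟩ := List.getElem_of_mem this
          exact ⟨k, hk, by rw [hfget k hk, hki]; exact ht⟩
        · rintro ⟨k, hk, ht⟩
          exact ⟨f k, hmem k, ht⟩
      rw [hunion (fun i => Icc (x i - r i) (x i + r i)),
        hunion (fun i => Icc (x i - δ * r i) (x i + δ * r i))]
      exact shrink_aux δ hδ0 hδ1 N (fun k => x (f k)) (fun k => r (f k)) hkey hkeyb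

/-- **Lemma (d = 1).** For a finite or countably infinite collection of closed intervals
`B(x i, r i) = [x i - r i, x i + r i]` in `ℝ` and `0 < δ ≤ 1`, the Lebesgue measure of
`⋃ i, B(x i, δ * r i)` is at least `δ` times that of `⋃ i, B(x i, r i)`. -/
theorem measure_iUnion_shrunk_intervals (ι : Type*) [Countable ι]
    (x r : ι → ℝ) (hr : ∀ i, 0 < r i) (δ : ℝ) (hδ0 : 0 < δ) (hδ1 : δ ≤ 1) :
    ENNReal.ofReal δ * volume (⋃ i, closedBall (x i) (r i)) ≤
      volume (⋃ i, closedBall (x i) (δ * r i)) := by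
  classical
  simp only [Real.closedBall_eq_Icc]
  rw [Set.iUnion_eq_iUnion_finset (fun i => Icc (x i - r i) (x i + r i))]
  have hdir : Directed (· ⊆ ·) (fun t : Finset ι => ⋃ i ∈ t, Icc (x i - r i) (x i + r i)) := by
    intro t₁ t₂
    exact ⟨t₁ ∪ t₂,
      Set.biUnion_subset_biUnion_left (fun i hi => Finset.mem_union_left _ hi),
      Set.biUnion_subset_biUnion_left (fun i hi => Finset.mem_union_right _ hi)⟩
  rw [hdir.measure_iUnion, ENNReal.mul_iSup]
  refine iSup_le fun t => ?_
  refine le_trans (shrink_finset x r δ hδ0 hδ1 t.card t le_rfl) ?_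
  refine measure_mono (Set.iUnion₂_subset fun i _ => ?_)
  exact Set.subset_iUnion (fun i => Icc (x i - δ * r i) (x i + δ * r i)) i
end

section
/- Let d ≥ 1, let {B(x_i, r_i)}_{i=1}^∞ be a finite or countably infinite collection of closed Euclidean balls in ℝ^d, and let 0 < δ ≤ 1. Then L^d(∪_i B(x_i, δ r_i)) ≥ (δ/3)^d · L^d(∪_i B(x_i, r_i)), where L^d denotes d-dimensional Lebesgue measure. -/
/-! By the Vitali covering lemma, for bounded radii and any `τ > 3` there is a disjoint
subfamily whose `τ`-fold enlargements cover the union. Shrinking the disjoint balls by `δ`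
keeps them disjoint and inside the shrunk union, and costs the factor `(δ / τ) ^ d` in measure
on each ball; then let `τ ↓ 3`. Unbounded radii are handled by exhausting the family by the
subfamilies `{i | r i ≤ n}` and continuity of the measure from below. -/

open MeasureTheory Metric Set Filter Topology Module

theorem Metric.closedBall_mul_subset_closedBall {α : Type*} [PseudoMetricSpace α] (x : α)
    {δ : ℝ} (hδ0 : 0 < δ) (hδ1 : δ ≤ 1) (r : ℝ) : closedBall x (δ * r) ⊆ closedBall x r := by
  rcases le_or_gt 0 r with hr | hr
  · exact closedBall_subset_closedBall (mul_le_of_le_one_left hr hδ1)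
  · simp [closedBall_eq_empty.2 (mul_neg_of_pos_of_neg hδ0 hr)]

section ShrunkBalls

variable {E : Type*} [NormedAddCommGroup E] [NormedSpace ℝ E] [FiniteDimensional ℝ E]
  [MeasurableSpace E] [BorelSpace E] (μ : Measure E) [μ.IsAddHaarMeasure]

theorem addHaar_closedBall_rescale (y : E) {δ τ : ℝ} (hδ : 0 < δ) (hτ : 0 < τ) (s : ℝ) :
    μ (closedBall y (δ * s)) =
      ENNReal.ofReal ((δ / τ) ^ finrank ℝ E) * μ (closedBall y (τ * s)) := by
  rw [Measure.addHaar_closedBall_center μ y (τ * s),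
    ← Measure.addHaar_closedBall_mul_of_pos μ y (div_pos hδ hτ)]
  congr 2
  field_simp

theorem ofReal_div_pow_mul_measure_biUnion_closedBall_le {ι : Type*} [Countable ι] (t : Set ι)
    (x : ι → E) (r : ι → ℝ) {R : ℝ} (hR : ∀ i ∈ t, r i ≤ R) {δ τ : ℝ} (hδ0 : 0 < δ)
    (hδ1 : δ ≤ 1) (hτ : 3 < τ) :
    ENNReal.ofReal ((δ / τ) ^ finrank ℝ E) * μ (⋃ i ∈ t, closedBall (x i) (r i)) ≤
      μ (⋃ i ∈ t, closedBall (x i) (δ * r i)) := by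
  obtain ⟨u, hut, hdisj, hcover⟩ :=
    Vitali.exists_disjoint_subfamily_covering_enlargement_closedBall t x r R hR τ hτ
  have hdisj_shrunk : u.PairwiseDisjoint fun j => closedBall (x j) (δ * r j) :=
    hdisj.mono fun j => closedBall_mul_subset_closedBall (x j) hδ0 hδ1 (r j)
  have hsub : ⋃ i ∈ t, closedBall (x i) (r i) ⊆ ⋃ j ∈ u, closedBall (x j) (τ * r j) := by
    refine iUnion₂_subset fun i hi => ?_
    obtain ⟨j, hju, hij⟩ := hcover i hi
    exact hij.trans (subset_biUnion_of_mem (u := fun j => closedBall (x j) (τ * r j)) hju)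
  set c := ENNReal.ofReal ((δ / τ) ^ finrank ℝ E)
  calc c * μ (⋃ i ∈ t, closedBall (x i) (r i))
      ≤ c * ∑' j : u, μ (closedBall (x j) (τ * r j)) := by
        gcongr
        exact (measure_mono hsub).trans (measure_biUnion_le μ u.to_countable _)
    _ = ∑' j : u, μ (closedBall (x j) (δ * r j)) := by
        rw [← ENNReal.tsum_mul_left]
        simp only [addHaar_closedBall_rescale μ _ hδ0 (zero_lt_three.trans hτ), c]
    _ = μ (⋃ j ∈ u, closedBall (x j) (δ * r j)) :=
        (measure_biUnion u.to_countable hdisj_shrunk fun _ _ => measurableSet_closedBall).symm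
    _ ≤ μ (⋃ i ∈ t, closedBall (x i) (δ * r i)) := measure_mono (biUnion_subset_biUnion_left hut)

theorem ofReal_div_three_pow_mul_measure_biUnion_closedBall_le {ι : Type*} [Countable ι]
    (t : Set ι) (x : ι → E) (r : ι → ℝ) {R : ℝ} (hR : ∀ i ∈ t, r i ≤ R) {δ : ℝ} (hδ0 : 0 < δ)
    (hδ1 : δ ≤ 1) :
    ENNReal.ofReal ((δ / 3) ^ finrank ℝ E) * μ (⋃ i ∈ t, closedBall (x i) (r i)) ≤
      μ (⋃ i ∈ t, closedBall (x i) (δ * r i)) := by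
  have hfactor : Tendsto (fun τ : ℝ => ENNReal.ofReal ((δ / τ) ^ finrank ℝ E)) (𝓝[>] 3)
      (𝓝 (ENNReal.ofReal ((δ / 3) ^ finrank ℝ E))) :=
    ((ENNReal.continuous_ofReal.tendsto _).comp
      ((tendsto_const_nhds.div tendsto_id three_ne_zero).pow _)).mono_left nhdsWithin_le_nhds
  have hfactor_ne_zero : ENNReal.ofReal ((δ / 3) ^ finrank ℝ E) ≠ 0 :=
    (ENNReal.ofReal_pos.2 (by positivity)).ne'
  exact le_of_tendsto (ENNReal.Tendsto.mul_const hfactor (Or.inl hfactor_ne_zero))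
    (eventually_nhdsWithin_of_forall fun τ hτ =>
      ofReal_div_pow_mul_measure_biUnion_closedBall_le μ t x r hR hδ0 hδ1 hτ)

theorem ofReal_div_three_pow_mul_measure_iUnion_closedBall_le {ι : Type*} [Countable ι]
    (x : ι → E) (r : ι → ℝ) {δ : ℝ} (hδ0 : 0 < δ) (hδ1 : δ ≤ 1) :
    ENNReal.ofReal ((δ / 3) ^ finrank ℝ E) * μ (⋃ i, closedBall (x i) (r i)) ≤
      μ (⋃ i, closedBall (x i) (δ * r i)) := by
  have hexhaust : ⋃ i, closedBall (x i) (r i) =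
      ⋃ n : ℕ, ⋃ i ∈ {i | r i ≤ n}, closedBall (x i) (r i) := by
    refine (iUnion_subset fun i => ?_).antisymm (iUnion_subset fun n => iUnion₂_subset_iUnion _ _)
    obtain ⟨n, hn⟩ := exists_nat_ge (r i)
    exact (subset_biUnion_of_mem (u := fun i => closedBall (x i) (r i))
      (show r i ≤ n from hn)).trans
      (subset_iUnion (fun n : ℕ => ⋃ i ∈ {i | r i ≤ n}, closedBall (x i) (r i)) n)
  have hmono : Monotone fun n : ℕ => ⋃ i ∈ {i | r i ≤ n}, closedBall (x i) (r i) :=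
    fun m n hmn => biUnion_subset_biUnion_left fun i (hi : r i ≤ m) =>
      hi.trans (Nat.cast_le.2 hmn)
  rw [hexhaust, hmono.measure_iUnion, ENNReal.mul_iSup]
  exact iSup_le fun n =>
    (ofReal_div_three_pow_mul_measure_biUnion_closedBall_le μ {i | r i ≤ n} x r (fun _ hi => hi)
      hδ0 hδ1).trans (measure_mono (iUnion₂_subset_iUnion _ _))

end ShrunkBalls

theorem measure_iUnion_shrunk_balls_general (d : ℕ) (ι : Type*) [Countable ι]
    (x : ι → EuclideanSpace ℝ (Fin d)) (r : ι → ℝ)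
    (δ : ℝ) (hδ0 : 0 < δ) (hδ1 : δ ≤ 1) :
    ENNReal.ofReal ((δ / 3) ^ d) * volume (⋃ i, closedBall (x i) (r i)) ≤
      volume (⋃ i, closedBall (x i) (δ * r i)) := by
  simpa only [finrank_euclideanSpace_fin] using
    ofReal_div_three_pow_mul_measure_iUnion_closedBall_le volume x r hδ0 hδ1

/-- **Lemma (general d).** For `d ≥ 1`, a finite or countably infinite collection of closed
Euclidean balls `B(x i, r i)` in `ℝ^d` and `0 < δ ≤ 1`, we have
`L^d(⋃ i, B(x i, δ r i)) ≥ (δ/3)^d · L^d(⋃ i, B(x i, r i))`. -/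
theorem measure_iUnion_shrunk_balls (d : ℕ) (hd : 1 ≤ d) (ι : Type*) [Countable ι]
    (x : ι → EuclideanSpace ℝ (Fin d)) (r : ι → ℝ) (hr : ∀ i, 0 < r i)
    (δ : ℝ) (hδ0 : 0 < δ) (hδ1 : δ ≤ 1) :
    ENNReal.ofReal ((δ / 3) ^ d) * volume (⋃ i, closedBall (x i) (r i)) ≤
      volume (⋃ i, closedBall (x i) (δ * r i)) :=
  measure_iUnion_shrunk_balls_general d ι x r δ hδ0 hδ1
end

section
/- Let {B(x_i, r_i)}_{i=1}^∞ be a countable collection of closed Euclidean balls in ℝ^d that is shrinking locally and such that Lebesgue-almost every point of ℝ^d belongs to limsup B(x_i, r_i). For N, M ∈ ℕ (with M ≥ 1), define B(N,M) = {α ∈ ℝ^d : for all i ≥ N, α ∉ B(x_i, r_i/M)}. Then L^d(B(N,M)) = 0 for every N, M ≥ 1. -/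
/-!
A point of `B(N,M)` lies in none of the shrunken balls `B(x i, r i / M)` with `i ≥ N`, so it
suffices that almost every point lying in infinitely many balls `B(x i, r i)` also lies in
infinitely many balls `B(x i, r i / M)`. For radii tending to `0` this is Cassels' lemma
`blimsup_cthickening_mul_ae_eq`, valid for any uniformly locally doubling measure. Shrinking
locally only makes the radii tend to `0` along the balls meeting a fixed bounded set, so one
applies Cassels' lemma to those balls and exhausts the space by countably many bounded sets.
-/

open MeasureTheory Metric Set Filter Topology

variable {X : Type*} [PseudoMetricSpace X]

def ShrinkingLocally (x : ℕ → X) (r : ℕ → ℝ) : Prop :=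
  ∀ (y : X) (ρ : ℝ), 0 < ρ → ∀ ε > (0 : ℝ),
    {i : ℕ | (closedBall (x i) (r i) ∩ closedBall y ρ).Nonempty ∧ ε < r i}.Finite

theorem mem_blimsup_iff_frequently_mem {ι α : Type*} {s : ι → Set α} {l : Filter ι}
    {p : ι → Prop} {a : α} : a ∈ blimsup s l p ↔ ∃ᶠ i in l, p i ∧ a ∈ s i := by
  rw [blimsup_eq_limsup, mem_limsup_iff_frequently_mem, frequently_inf_principal]
  rfl

section Doubling

variable [SecondCountableTopology X] [MeasurableSpace X] [BorelSpace X]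
  (μ : Measure X) [IsLocallyFiniteMeasure μ] [IsUnifLocDoublingMeasure μ]

theorem blimsup_closedBall_mul_ae_eq (p : ℕ → Prop) (x : ℕ → X) {r : ℕ → ℝ}
    (hr : ∀ i, p i → 0 ≤ r i) (hfin : ∀ ε > (0 : ℝ), {i | p i ∧ ε < r i}.Finite)
    {c : ℝ} (hc : 0 < c) :
    (blimsup (fun i => closedBall (x i) (c * r i)) atTop p : Set X) =ᵐ[μ]
      (blimsup (fun i => closedBall (x i) (r i)) atTop p : Set X) := by
  classical
  -- Off `p` the radii are irrelevant to `blimsup`, so replace them by `0` to get `ρ → 0`.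
  set ρ : ℕ → ℝ := fun i => if p i then r i else 0
  have hρ_nonneg : ∀ i, 0 ≤ ρ i := fun i => by
    by_cases hi : p i
    · simpa [ρ, hi] using hr i hi
    · simp [ρ, hi]
  have hρ : Tendsto ρ atTop (𝓝 0) := by
    refine tendsto_order.2 ⟨fun a ha => Eventually.of_forall fun i => ha.trans_le (hρ_nonneg i),
      fun a ha => ?_⟩
    rw [← Nat.cofinite_eq_atTop]
    refine (hfin (a / 2) (half_pos ha)).subset fun i hi => ?_
    have hle : a ≤ ρ i := not_lt.1 hi
    by_cases hpi : p i
    · simp only [ρ, hpi, if_true] at hle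
      exact ⟨hpi, by linarith⟩
    · simp only [ρ, hpi, if_false] at hle
      linarith
  have hball : ∀ c' > (0 : ℝ), ∀ᶠ i in atTop, p i →
      cthickening (c' * ρ i) {x i} = closedBall (x i) (c' * r i) := fun c' hc' =>
    Eventually.of_forall fun i hi => by
      simp only [ρ, hi, if_true]
      exact cthickening_singleton _ (mul_nonneg hc'.le (hr i hi))
  have hball_one : ∀ᶠ i in atTop, p i → cthickening (ρ i) {x i} = closedBall (x i) (r i) := by
    simpa only [one_mul] using hball 1 one_pos
  have h := blimsup_cthickening_mul_ae_eq μ p (fun i => {x i}) hc ρ hρ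
  rwa [blimsup_congr (hball c hc), blimsup_congr hball_one] at h

theorem ShrinkingLocally.ae_frequently_mem_closedBall_mul {x : ℕ → X} {r : ℕ → ℝ}
    (hx : ShrinkingLocally x r) {c : ℝ} (hc : 0 < c) :
    ∀ᵐ a ∂μ, (∃ᶠ i in atTop, a ∈ closedBall (x i) (r i)) →
      ∃ᶠ i in atTop, a ∈ closedBall (x i) (c * r i) := by
  rcases isEmpty_or_nonempty X with _ | ⟨⟨y⟩⟩
  · exact Eventually.of_forall fun a => isEmptyElim a
  have hloc : ∀ n : ℕ, ∀ᵐ a ∂μ, a ∈ closedBall y (n + 1) →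
      (∃ᶠ i in atTop, a ∈ closedBall (x i) (r i)) →
        ∃ᶠ i in atTop, a ∈ closedBall (x i) (c * r i) := by
    intro n
    set p : ℕ → Prop := fun i => (closedBall (x i) (r i) ∩ closedBall y (n + 1)).Nonempty
    have hp : ∀ i, p i → 0 ≤ r i := fun i hi => nonempty_closedBall.1 (hi.mono inter_subset_left)
    filter_upwards [blimsup_closedBall_mul_ae_eq μ p x hp (hx y (n + 1) (by positivity)) hc]
      with a ha hay hfreq
    have hmem : a ∈ blimsup (fun i => closedBall (x i) (r i)) atTop p :=
      mem_blimsup_iff_frequently_mem.2 (hfreq.mono fun i hi => ⟨⟨a, hi, hay⟩, hi⟩)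
    exact (mem_blimsup_iff_frequently_mem.1 (ha.mpr hmem)).mono fun i hi => hi.2
  filter_upwards [ae_all_iff.2 hloc] with a ha
  obtain ⟨n, hn⟩ := exists_nat_ge (dist a y)
  exact ha n (mem_closedBall.2 (by linarith))

end Doubling

theorem measure_BNM_eq_zero_general (d : ℕ)
    (x : ℕ → EuclideanSpace ℝ (Fin d)) (r : ℕ → ℝ)
    (hshrink : ∀ (y : EuclideanSpace ℝ (Fin d)) (ρ : ℝ), 0 < ρ → ∀ ε > (0 : ℝ),
      {i : ℕ | (closedBall (x i) (r i) ∩ closedBall y ρ).Nonempty ∧ ε < r i}.Finite)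
    (hae : ∀ᵐ α : EuclideanSpace ℝ (Fin d), ∀ n : ℕ, ∃ i ≥ n, α ∈ closedBall (x i) (r i))
    (N M : ℕ) (hM : 1 ≤ M) :
    volume {α : EuclideanSpace ℝ (Fin d) |
      ∀ i ≥ N, α ∉ closedBall (x i) (r i / M)} = 0 := by
  have hM' : (0 : ℝ) < M := by exact_mod_cast hM
  rw [measure_eq_zero_iff_ae_notMem]
  filter_upwards [hae, ShrinkingLocally.ae_frequently_mem_closedBall_mul volume (x := x) hshrink
    (inv_pos.2 hM')] with α hlim hscaled hα
  obtain ⟨i, hi, hmem⟩ := frequently_atTop.1 (hscaled (frequently_atTop.2 hlim)) N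
  exact hα i hi (by rwa [div_eq_inv_mul])

/-- For a shrinking-locally countable collection of closed Euclidean balls in `ℝ^d` whose
limsup set has full Lebesgue measure, the set
`B(N,M) = {α | ∀ i ≥ N, α ∉ B(x i, r i / M)}` has Lebesgue measure zero for all
`N, M ∈ ℕ` with `M ≥ 1`. -/
theorem measure_BNM_eq_zero (d : ℕ)
    (x : ℕ → EuclideanSpace ℝ (Fin d)) (r : ℕ → ℝ) (hr : ∀ i, 0 < r i)
    (hshrink : ∀ (y : EuclideanSpace ℝ (Fin d)) (ρ : ℝ), 0 < ρ → ∀ ε > (0 : ℝ),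
      {i : ℕ | (closedBall (x i) (r i) ∩ closedBall y ρ).Nonempty ∧ ε < r i}.Finite)
    (hae : ∀ᵐ α : EuclideanSpace ℝ (Fin d), ∀ n : ℕ, ∃ i ≥ n, α ∈ closedBall (x i) (r i))
    (N M : ℕ) (hM : 1 ≤ M) :
    volume {α : EuclideanSpace ℝ (Fin d) |
      ∀ i ≥ N, α ∉ closedBall (x i) (r i / M)} = 0 :=
  measure_BNM_eq_zero_general d x r hshrink hae N M hM
end

section
/- Let {B(x_i, r_i)}_{i=1}^M be a finite collection of closed intervals in ℝ (with B(x,r) = [x−r,x+r]) and 0 < δ ≤ 1. Suppose {B(x_j, δ r_j)}_{j=1}^{N} is a subfamily whose union ∪_{j=1}^{N} B(x_j, δ r_j) is a connected component of ∪_{i=1}^{M} B(x_i, δ r_i). Then the union of the corresponding enlarged intervals ∪_{j=1}^{N} B(x_j, r_j) is an interval, and the Lebesgue measure of the component satisfies L(∪_{j=1}^{N} B(x_j, δ r_j)) ≥ δ · L(∪_{j=1}^{N} B(x_j, r_j)). -/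
open MeasureTheory Metric Set

/-- Let `{B(x i, r i)}_{i < M}` be a finite collection of closed intervals in `ℝ` and
`0 < δ ≤ 1`. If the union over a subfamily `s` of the shrunk intervals `B(x j, δ r j)` is a
connected component of `⋃ i, B(x i, δ r i)`, then the union of the corresponding enlarged
intervals `⋃ j ∈ s, B(x j, r j)` is a closed interval, and the Lebesgue measure of the
component is at least `δ` times that of `⋃ j ∈ s, B(x j, r j)`. -/
theorem component_measure_bound (M : ℕ) (x r : Fin M → ℝ) (hr : ∀ i, 0 < r i)
    (δ : ℝ) (hδ0 : 0 < δ) (hδ1 : δ ≤ 1) (s : Finset (Fin M))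
    (hcomp : ∃ a ∈ ⋃ j ∈ s, closedBall (x j) (δ * r j),
      (⋃ j ∈ s, closedBall (x j) (δ * r j)) =
        connectedComponentIn (⋃ i, closedBall (x i) (δ * r i)) a) :
    (∃ a b : ℝ, (⋃ j ∈ s, closedBall (x j) (r j)) = Set.Icc a b) ∧
    ENNReal.ofReal δ * volume (⋃ j ∈ s, closedBall (x j) (r j)) ≤
      volume (⋃ j ∈ s, closedBall (x j) (δ * r j)) := by
  classical
  obtain ⟨a, ha, hU⟩ := hcomp
  rw [mem_iUnion₂] at ha
  obtain ⟨j₀, hj₀, -⟩ := ha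
  have hsne : s.Nonempty := ⟨j₀, hj₀⟩
  set c := s.inf' hsne (fun j => x j - δ * r j) with hc_def
  set d := s.sup' hsne (fun j => x j + δ * r j) with hd_def
  set A := s.inf' hsne (fun j => x j - r j) with hA_def
  set B := s.sup' hsne (fun j => x j + r j) with hB_def
  have hδr : ∀ j, 0 ≤ δ * r j := fun j => le_of_lt (mul_pos hδ0 (hr j))
  have hpre : IsPreconnected (⋃ j ∈ s, closedBall (x j) (δ * r j)) := by
    rw [hU]; exact isPreconnected_connectedComponentIn
  have hord := hpre.ordConnected
  have hmemδ : ∀ j ∈ s, ∀ y : ℝ, x j - δ * r j ≤ y → y ≤ x j + δ * r j →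
      y ∈ ⋃ j ∈ s, closedBall (x j) (δ * r j) := by
    intro j hj y h1 h2
    exact mem_iUnion₂.2 ⟨j, hj, by rw [Real.closedBall_eq_Icc]; exact ⟨h1, h2⟩⟩
  obtain ⟨jc, hjc, hjceq⟩ := s.exists_mem_eq_inf' hsne (fun j => x j - δ * r j)
  obtain ⟨jd, hjd, hjdeq⟩ := s.exists_mem_eq_sup' hsne (fun j => x j + δ * r j)
  obtain ⟨jA, hjA, hjAeq⟩ := s.exists_mem_eq_inf' hsne (fun j => x j - r j)
  obtain ⟨jB, hjB, hjBeq⟩ := s.exists_mem_eq_sup' hsne (fun j => x j + r j)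
  have hceq : c = x jc - δ * r jc := hc_def.trans hjceq
  have hdeq : d = x jd + δ * r jd := hd_def.trans hjdeq
  have hAeq : A = x jA - r jA := hA_def.trans hjAeq
  have hBeq : B = x jB + r jB := hB_def.trans hjBeq
  have hcmem : c ∈ ⋃ j ∈ s, closedBall (x j) (δ * r j) := by
    refine hmemδ jc hjc c ?_ ?_ <;> rw [hceq] <;> linarith [hδr jc]
  have hdmem : d ∈ ⋃ j ∈ s, closedBall (x j) (δ * r j) := by
    refine hmemδ jd hjd d ?_ ?_ <;> rw [hdeq] <;> linarith [hδr jd]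
  have hIcc_sub : Icc c d ⊆ ⋃ j ∈ s, closedBall (x j) (δ * r j) :=
    hord.out hcmem hdmem
  have hδsub : (⋃ j ∈ s, closedBall (x j) (δ * r j)) ⊆
      ⋃ j ∈ s, closedBall (x j) (r j) := by
    refine iUnion₂_mono fun j _ => closedBall_subset_closedBall ?_
    nlinarith [hr j]
  -- inequalities from inf'/sup'
  have hcA : c ≤ x jA - δ * r jA := hc_def ▸ s.inf'_le (fun j => x j - δ * r j) hjA
  have hdB : x jB + δ * r jB ≤ d := hd_def ▸ s.le_sup' (fun j => x j + δ * r j) hjB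
  have hAB1 : A ≤ x jB - r jB := hA_def ▸ s.inf'_le (fun j => x j - r j) hjB
  have hAB2 : x jA + r jA ≤ B := hB_def ▸ s.le_sup' (fun j => x j + r j) hjA
  have hbig : (⋃ j ∈ s, closedBall (x j) (r j)) = Icc A B := by
    apply Subset.antisymm
    · intro y hy
      rw [mem_iUnion₂] at hy
      obtain ⟨j, hj, hyj⟩ := hy
      rw [Real.closedBall_eq_Icc] at hyj
      exact ⟨le_trans (hA_def ▸ s.inf'_le (fun j => x j - r j) hj) hyj.1,
        le_trans hyj.2 (hB_def ▸ s.le_sup' (fun j => x j + r j) hj)⟩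
    · intro y hy
      rcases lt_or_ge y c with h1 | h1
      · refine mem_iUnion₂.2 ⟨jA, hjA, ?_⟩
        rw [Real.closedBall_eq_Icc]
        constructor
        · rw [← hAeq]; exact hy.1
        · have := hδr jA
          have := (hr jA).le
          linarith
      rcases le_or_gt y d with h2 | h2
      · exact hδsub (hIcc_sub ⟨h1, h2⟩)
      · refine mem_iUnion₂.2 ⟨jB, hjB, ?_⟩
        rw [Real.closedBall_eq_Icc]
        constructor
        · have := hδr jB
          have := (hr jB).le
          linarith
        · rw [← hBeq]; exact hy.2
  refine ⟨⟨A, B, hbig⟩, ?_⟩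
  have hv1 : ENNReal.ofReal (d - c) ≤ volume (⋃ j ∈ s, closedBall (x j) (δ * r j)) := by
    rw [← Real.volume_Icc]
    exact measure_mono hIcc_sub
  rw [hbig, Real.volume_Icc, ← ENNReal.ofReal_mul hδ0.le]
  refine le_trans (ENNReal.ofReal_le_ofReal ?_) hv1
  -- real inequality
  have hx : x jA ≤ x jB := by
    rw [hAeq] at hAB1; rw [hBeq] at hAB2; linarith
  have hkey : 0 ≤ (1 - δ) * (x jB - x jA) :=
    mul_nonneg (by linarith) (by linarith)
  rw [hAeq, hBeq]
  nlinarith [hδr jA, hδr jB]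
end

section
/- Let {B(x_i, r_i)}_{i=1}^∞ be a countable collection of closed Euclidean balls in ℝ^d that is shrinking locally and such that Lebesgue-almost every point of ℝ^d lies in limsup B(x_i, r_i). Fix N, M ∈ ℕ with M ≥ 1 and set B(N,M) = {α ∈ ℝ^d : α ∉ B(x_i, r_i/M) for all i ≥ N}. Then for every y ∈ B(N,M), limsup_{r→0} L^d(B(y,r) ∩ B(N,M)) / L^d(B(y,r)) ≤ 1 − (1/(3M))^d. -/
/-!
Fix a ball `B(y, ρ)` and `0 < ε < 1`. Because the collection shrinks locally and almost every point
is covered infinitely often, almost every point of `B(y, (1 - ε) ρ)` lies in a ball `B(x_i, r_i)`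
with `i ≥ N` and `r_i ≤ ε ρ / 2`; such balls stay inside `B(y, ρ)`. The Vitali covering lemma picks
a disjoint subfamily whose `(3 + ε)`-fold enlargements cover these balls, so the shrunken balls
`B(x_i, r_i / M)` of the subfamily fill at least `((1 - ε) / ((3 + ε) M))^d` of `B(y, ρ)`, and
they miss `B(N, M)`. Letting `ε → 0` bounds the density of `B(N, M)` in every ball, not only
asymptotically.
-/

open MeasureTheory Metric Set Filter ENNReal Topology Module

def ShrinksLocally {α : Type*} [PseudoMetricSpace α] (x : ℕ → α) (r : ℕ → ℝ) : Prop :=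
  ∀ (y : α) (ρ : ℝ), 0 < ρ → ∀ ε > (0 : ℝ),
    {i : ℕ | (closedBall (x i) (r i) ∩ closedBall y ρ).Nonempty ∧ ε < r i}.Finite

/-- The set `B(N, M)` of the paper, with `M = c`. -/
def outsideShrunkBalls {α : Type*} [PseudoMetricSpace α] (x : ℕ → α) (r : ℕ → ℝ) (N : ℕ)
    (c : ℝ) : Set α :=
  {z | ∀ i ≥ N, z ∉ closedBall (x i) (r i / c)}

theorem ShrinksLocally.ae_exists_late_small_ball {α : Type*} [PseudoMetricSpace α]
    [MeasurableSpace α] {μ : Measure α} {x : ℕ → α} {r : ℕ → ℝ} (h : ShrinksLocally x r)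
    (hae : ∀ᵐ z ∂μ, ∀ n, ∃ i ≥ n, z ∈ closedBall (x i) (r i)) (N : ℕ) (y : α) {s β : ℝ}
    (hs : 0 < s) (hβ : 0 < β) :
    ∀ᵐ z ∂μ, z ∈ closedBall y s → ∃ i ≥ N, r i ≤ β ∧ z ∈ closedBall (x i) (r i) := by
  obtain ⟨n, hn⟩ := (h y s hs β hβ).bddAbove
  filter_upwards [hae] with z hz hzs
  obtain ⟨i, hi, hzi⟩ := hz (max N (n + 1))
  refine ⟨i, le_of_max_le_left hi, not_lt.1 fun hβi => ?_, hzi⟩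
  have : i ≤ n := hn ⟨⟨z, hzi, hzs⟩, hβi⟩
  omega

theorem Vitali.exists_disjoint_subfamily_measure_le_tsum_enlargement {α ι : Type*}
    [PseudoMetricSpace α] [MeasurableSpace α] [Countable ι] (μ : Measure α) {A : Set α}
    {t : Set ι} (x : ι → α) (r : ι → ℝ) {R : ℝ} (hR : ∀ i ∈ t, r i ≤ R)
    (hA : ∀ᵐ z ∂μ, z ∈ A → ∃ i ∈ t, z ∈ closedBall (x i) (r i)) {τ : ℝ} (hτ : 3 < τ) :
    ∃ u ⊆ t, u.PairwiseDisjoint (fun i => closedBall (x i) (r i)) ∧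
      μ A ≤ ∑' i : u, μ (closedBall (x i) (τ * r i)) := by
  obtain ⟨u, hut, hdisj, henl⟩ :=
    Vitali.exists_disjoint_subfamily_covering_enlargement_closedBall t x r R hR τ hτ
  refine ⟨u, hut, hdisj, ?_⟩
  calc μ A ≤ μ (⋃ i ∈ t, closedBall (x i) (r i)) :=
        measure_mono_ae <| hA.mono fun z hz hzA =>
          let ⟨i, hi, hzi⟩ := hz hzA; mem_biUnion hi hzi
    _ ≤ μ (⋃ i ∈ u, closedBall (x i) (τ * r i)) := by
        refine measure_mono (iUnion₂_subset fun i hi => ?_)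
        obtain ⟨b, hb, hsub⟩ := henl i hi
        exact hsub.trans (subset_biUnion_of_mem (u := fun j => closedBall (x j) (τ * r j)) hb)
    _ ≤ ∑' i : u, μ (closedBall (x i) (τ * r i)) := measure_biUnion_le μ u.to_countable _

theorem closedBall_subset_closedBall_of_inter_nonempty {α : Type*} [PseudoMetricSpace α]
    {a y : α} {r s ρ : ℝ} (h : (closedBall a r ∩ closedBall y s).Nonempty) (hρ : 2 * r + s ≤ ρ) :
    closedBall a r ⊆ closedBall y ρ := by
  obtain ⟨z, hza, hzy⟩ := h
  rw [mem_closedBall'] at hza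
  rw [mem_closedBall] at hzy
  exact closedBall_subset_closedBall' (by linarith [dist_triangle a z y])

theorem ENNReal.div_le_one_sub_of_add_mul_le {a b L : ℝ≥0∞} (h : a + L * b ≤ b) (hb₀ : b ≠ 0)
    (hb : b ≠ ∞) : a / b ≤ 1 - L := by
  have hsum : a / b + L ≤ 1 := by
    have := ENNReal.div_le_of_le_mul (h.trans_eq (one_mul b).symm)
    rwa [ENNReal.add_div, mul_div_assoc, ENNReal.div_self hb₀ hb, mul_one] at this
  exact ENNReal.le_sub_of_add_le_right (ne_top_of_le_ne_top one_ne_top (le_add_self.trans hsum))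
    hsum

section AddHaar

variable {E : Type*} [NormedAddCommGroup E] [NormedSpace ℝ E] [FiniteDimensional ℝ E]
  [MeasurableSpace E] [BorelSpace E] (μ : Measure E) [μ.IsAddHaarMeasure]

theorem addHaar_closedBall_mul_radius (z : E) {k a : ℝ} (hk : 0 ≤ k) (ha : 0 ≤ a) :
    μ (closedBall z (k * a)) = ENNReal.ofReal (k ^ finrank ℝ E) * μ (closedBall z a) := by
  rw [Measure.addHaar_closedBall_mul μ z hk ha, Measure.addHaar_closedBall_center μ z]

theorem addHaar_biUnion_closedBall_div_eq {ι : Type*} [Countable ι] {u : Set ι} {x : ι → E}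
    {r : ι → ℝ} (hr : ∀ i ∈ u, 0 ≤ r i)
    (hdisj : u.PairwiseDisjoint (fun i => closedBall (x i) (r i))) {c τ : ℝ} (hc : 1 ≤ c)
    (hτ : 0 < τ) :
    ENNReal.ofReal ((1 / (τ * c)) ^ finrank ℝ E) * ∑' i : u, μ (closedBall (x i) (τ * r i)) =
      μ (⋃ i ∈ u, closedBall (x i) (r i / c)) := by
  have hshrunk : ∀ i ∈ u, closedBall (x i) (r i / c) ⊆ closedBall (x i) (r i) := fun i hi =>
    closedBall_subset_closedBall (div_le_self (hr i hi) hc)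
  rw [measure_biUnion u.to_countable (hdisj.mono_on hshrunk) fun _ _ => measurableSet_closedBall,
    ← ENNReal.tsum_mul_left]
  refine tsum_congr fun i => ?_
  rw [← addHaar_closedBall_mul_radius μ _ (by positivity) (mul_nonneg hτ.le (hr i i.2))]
  congr 2
  field_simp

theorem measure_closedBall_inter_outsideShrunkBalls_add_le_of_lt_one {x : ℕ → E} {r : ℕ → ℝ}
    (hr : ∀ i, 0 ≤ r i) (hshrink : ShrinksLocally x r)
    (hae : ∀ᵐ z ∂μ, ∀ n, ∃ i ≥ n, z ∈ closedBall (x i) (r i)) (N : ℕ) {c : ℝ} (hc : 1 ≤ c)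
    (y : E) {ρ ε : ℝ} (hρ : 0 < ρ) (hε₀ : 0 < ε) (hε₁ : ε < 1) :
    μ (closedBall y ρ ∩ outsideShrunkBalls x r N c) +
        ENNReal.ofReal (((1 - ε) / ((3 + ε) * c)) ^ finrank ℝ E) * μ (closedBall y ρ) ≤
      μ (closedBall y ρ) := by
  set S := outsideShrunkBalls x r N c
  set s := (1 - ε) * ρ
  set β := ε * ρ / 2
  have hsplit : 2 * β + s = ρ := by simp only [s, β]; ring
  set t := {i | N ≤ i ∧ r i ≤ β ∧ (closedBall (x i) (r i) ∩ closedBall y s).Nonempty}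
  have hcover : ∀ᵐ z ∂μ, z ∈ closedBall y s → ∃ i ∈ t, z ∈ closedBall (x i) (r i) := by
    filter_upwards [hshrink.ae_exists_late_small_ball hae N y (by positivity : 0 < s)
      (by positivity : 0 < β)] with z hz hzs
    obtain ⟨i, hiN, hiβ, hzi⟩ := hz hzs
    exact ⟨i, ⟨hiN, hiβ, z, hzi, hzs⟩, hzi⟩
  obtain ⟨u, hut, hdisj, hvol⟩ := Vitali.exists_disjoint_subfamily_measure_le_tsum_enlargement
    μ x r (fun i hi => hi.2.1) hcover (by linarith : 3 < 3 + ε)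
  have hshrunk : ∀ i, closedBall (x i) (r i / c) ⊆ closedBall (x i) (r i) := fun i =>
    closedBall_subset_closedBall (div_le_self (hr i) hc)
  set U := ⋃ i ∈ u, closedBall (x i) (r i / c)
  have hU_sub : U ⊆ closedBall y ρ := iUnion₂_subset fun i hi =>
    (hshrunk i).trans <| closedBall_subset_closedBall_of_inter_nonempty (hut hi).2.2
      (by linarith [(hut hi).2.1, hsplit])
  have hU_disj : Disjoint S U := by
    refine Set.disjoint_left.2 fun z hzS hzU => ?_
    obtain ⟨i, hi, hzi⟩ := mem_iUnion₂.1 hzU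
    exact hzS i (hut hi).1 hzi
  have hU_large : ENNReal.ofReal (((1 - ε) / ((3 + ε) * c)) ^ finrank ℝ E) * μ (closedBall y ρ)
      ≤ μ U :=
    calc ENNReal.ofReal (((1 - ε) / ((3 + ε) * c)) ^ finrank ℝ E) * μ (closedBall y ρ)
        = ENNReal.ofReal ((1 / ((3 + ε) * c)) ^ finrank ℝ E) * μ (closedBall y s) := by
          rw [addHaar_closedBall_mul_radius μ y (by linarith) hρ.le, ← mul_assoc,
            ← ENNReal.ofReal_mul (by positivity), ← mul_pow, one_div_mul_eq_div]
      _ ≤ ENNReal.ofReal ((1 / ((3 + ε) * c)) ^ finrank ℝ E) *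
            ∑' i : u, μ (closedBall (x i) ((3 + ε) * r i)) := by gcongr
      _ = μ U := addHaar_biUnion_closedBall_div_eq μ (fun i _ => hr i) hdisj hc (by positivity)
  calc μ (closedBall y ρ ∩ S) +
        ENNReal.ofReal (((1 - ε) / ((3 + ε) * c)) ^ finrank ℝ E) * μ (closedBall y ρ)
      ≤ μ (closedBall y ρ ∩ S) + μ U := by gcongr
    _ = μ (closedBall y ρ ∩ S ∪ U) := (measure_union (hU_disj.mono_left inter_subset_right)
        (.biUnion u.to_countable fun _ _ => measurableSet_closedBall)).symm
    _ ≤ μ (closedBall y ρ) := measure_mono (union_subset inter_subset_left hU_sub)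

theorem measure_closedBall_inter_outsideShrunkBalls_add_le {x : ℕ → E} {r : ℕ → ℝ}
    (hr : ∀ i, 0 ≤ r i) (hshrink : ShrinksLocally x r)
    (hae : ∀ᵐ z ∂μ, ∀ n, ∃ i ≥ n, z ∈ closedBall (x i) (r i)) (N : ℕ) {c : ℝ} (hc : 1 ≤ c)
    (y : E) {ρ : ℝ} (hρ : 0 < ρ) :
    μ (closedBall y ρ ∩ outsideShrunkBalls x r N c) +
        ENNReal.ofReal ((1 / (3 * c)) ^ finrank ℝ E) * μ (closedBall y ρ) ≤
      μ (closedBall y ρ) := by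
  have hlim : Tendsto (fun ε : ℝ => ((1 - ε) / ((3 + ε) * c)) ^ finrank ℝ E) (𝓝[>] 0)
      (𝓝 ((1 / (3 * c)) ^ finrank ℝ E)) := by
    refine tendsto_nhdsWithin_of_tendsto_nhds ?_
    have hcont : ContinuousAt (fun ε : ℝ => ((1 - ε) / ((3 + ε) * c)) ^ finrank ℝ E) 0 := by
      refine ((continuousAt_const.sub continuousAt_id).div
        ((continuousAt_const.add continuousAt_id).mul continuousAt_const) ?_).pow _
      exact mul_ne_zero (by norm_num) (by positivity)
    simpa using hcont.tendsto
  refine le_of_tendsto ((ENNReal.Tendsto.mul_const (ENNReal.tendsto_ofReal hlim)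
    (Or.inr measure_closedBall_lt_top.ne)).const_add _) ?_
  filter_upwards [Ioo_mem_nhdsGT one_pos] with ε hε
  exact measure_closedBall_inter_outsideShrunkBalls_add_le_of_lt_one μ hr hshrink hae N hc y hρ
    hε.1 hε.2

end AddHaar

theorem density_BNM_le_general (d : ℕ)
    (x : ℕ → EuclideanSpace ℝ (Fin d)) (r : ℕ → ℝ) (hr : ∀ i, 0 < r i)
    (hshrink : ∀ (y : EuclideanSpace ℝ (Fin d)) (ρ : ℝ), 0 < ρ → ∀ ε > (0 : ℝ),
      {i : ℕ | (closedBall (x i) (r i) ∩ closedBall y ρ).Nonempty ∧ ε < r i}.Finite)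
    (hae : ∀ᵐ α : EuclideanSpace ℝ (Fin d), ∀ n : ℕ, ∃ i ≥ n, α ∈ closedBall (x i) (r i))
    (N M : ℕ) (hM : 1 ≤ M)
    (y : EuclideanSpace ℝ (Fin d)) :
    Filter.limsup
        (fun ρ : ℝ => volume (closedBall y ρ ∩
            {α : EuclideanSpace ℝ (Fin d) | ∀ i ≥ N, α ∉ closedBall (x i) (r i / M)}) /
          volume (closedBall y ρ))
        (nhdsWithin 0 (Set.Ioi 0)) ≤
      1 - (1 / (3 * (M : ℝ≥0∞))) ^ d := by
  have hM' : (1 : ℝ) ≤ M := by exact_mod_cast hM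
  have hconst : ENNReal.ofReal ((1 / (3 * (M : ℝ))) ^ d) = (1 / (3 * (M : ℝ≥0∞))) ^ d := by
    rw [ENNReal.ofReal_pow (by positivity), ENNReal.ofReal_div_of_pos (by positivity),
      ENNReal.ofReal_one, ENNReal.ofReal_mul (by norm_num), ENNReal.ofReal_ofNat,
      ENNReal.ofReal_natCast]
  refine limsup_le_of_le (by isBoundedDefault) ?_
  filter_upwards [self_mem_nhdsWithin] with ρ hρ
  have key := measure_closedBall_inter_outsideShrunkBalls_add_le volume
    (fun i => (hr i).le) hshrink hae N hM' y hρ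
  rw [finrank_euclideanSpace_fin, hconst] at key
  exact ENNReal.div_le_one_sub_of_add_mul_le key (measure_closedBall_pos volume y hρ).ne'
    measure_closedBall_lt_top.ne

/-- For a shrinking-locally countable collection of closed Euclidean balls in `ℝ^d`
whose limsup set has full Lebesgue measure, fix `N, M ∈ ℕ` with `M ≥ 1` and let
`B(N,M) = {α | ∀ i ≥ N, α ∉ B(x i, r i / M)}`. Then at every point `y ∈ B(N,M)` the upper
density of `B(N,M)` is at most `1 - (1/(3M))^d`. -/
theorem density_BNM_le (d : ℕ)
    (x : ℕ → EuclideanSpace ℝ (Fin d)) (r : ℕ → ℝ) (hr : ∀ i, 0 < r i)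
    (hshrink : ∀ (y : EuclideanSpace ℝ (Fin d)) (ρ : ℝ), 0 < ρ → ∀ ε > (0 : ℝ),
      {i : ℕ | (closedBall (x i) (r i) ∩ closedBall y ρ).Nonempty ∧ ε < r i}.Finite)
    (hae : ∀ᵐ α : EuclideanSpace ℝ (Fin d), ∀ n : ℕ, ∃ i ≥ n, α ∈ closedBall (x i) (r i))
    (N M : ℕ) (hM : 1 ≤ M)
    (y : EuclideanSpace ℝ (Fin d))
    (hy : y ∈ {α : EuclideanSpace ℝ (Fin d) | ∀ i ≥ N, α ∉ closedBall (x i) (r i / M)}) :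
    Filter.limsup
        (fun ρ : ℝ => volume (closedBall y ρ ∩
            {α : EuclideanSpace ℝ (Fin d) | ∀ i ≥ N, α ∉ closedBall (x i) (r i / M)}) /
          volume (closedBall y ρ))
        (nhdsWithin 0 (Set.Ioi 0)) ≤
      1 - (1 / (3 * (M : ℝ≥0∞))) ^ d :=
  density_BNM_le_general d x r hr hshrink hae N M hM y
end
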